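/- arXiv:1701.02168 — 3 statements merged into one kernel-verified Lean document; each statement's English description precedes it below -/
import Mathlib

section
/- Let A be a parity automaton with costs, and let (ρ_j^1)_{j∈ℕ} and (ρ_j^2)_{j∈ℕ} be sequences of non-empty finite runs of A such that for every j the runs ρ_j^1 and ρ_j^2 have the same type, the last state of ρ_j^i equals the first state of ρ_{j+1}^i for every j and i ∈ {1,2} (so the concatenations ρ' = ρ_0^1 ρ_1^1 ρ_2^1 ⋯ and ρ'' = ρ_0^2 ρ_1^2 ρ_2^2 ⋯ are infinite runs of A), and sup_j |ρ_j^2| = d < ∞. If limsup_{n→∞} Cor(ρ', n) ≤ b for some b ∈ ℕ, then limsup_{n→∞} Cor(ρ'', n) ≤ (b+2)·d; in particular, if ρ' is an accepting run, then ρ'' is an accepting run as well. -/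
attribute [local instance] Classical.propDecidable

noncomputable section

/-- A parity automaton with costs `(Q, A, qI, δ, Ω, Cst)`.
`Cst q a = true` means that the transition `(q, a, δ q a)` is an increment-transition,
`Cst q a = false` means it is an `ε`-transition. -/
structure PACost (Q : Type) (A : Type) where
  qI : Q
  δ : Q → A → Q
  Ω : Q → ℕ
  Cst : Q → A → Bool

namespace PACost

variable {Q A : Type}

/-- The state reached after processing the first `n` letters of `w` starting in `q0`. -/
def stateAt (M : PACost Q A) (q0 : Q) (w : ℕ → A) : ℕ → Q
  | 0 => q0
  | n + 1 => M.δ (stateAt M q0 w n) (w n)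

/-- The cost (number of increment-transitions) of the run infix between positions `m` and `n`. -/
def segCost (M : PACost Q A) (q0 : Q) (w : ℕ → A) (m n : ℕ) : ℕ :=
  ((Finset.Ico m n).filter fun j => M.Cst (stateAt M q0 w j) (w j) = true).card

/-- `Ans c`: the set of even colors of `M` that are larger than `c`. -/
def Ans (M : PACost Q A) (c : ℕ) : Set ℕ :=
  { c' | (∃ q, M.Ω q = c') ∧ c < c' ∧ Even c' }

/-- The cost-of-response at position `n` of the run of `M` on `w` starting in `q0`. -/
def Cor (M : PACost Q A) (q0 : Q) (w : ℕ → A) (n : ℕ) : ℕ∞ :=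
  if Even (M.Ω (stateAt M q0 w n)) then 0
  else
    sInf { c : ℕ∞ | ∃ n', n < n' ∧
      M.Ω (stateAt M q0 w n') ∈ M.Ans (M.Ω (stateAt M q0 w n)) ∧
      c = (segCost M q0 w n n' : ℕ∞) }

/-- The run of `M` on `w` starting in `q0` satisfies the parity condition with costs. -/
def Accepting (M : PACost Q A) (q0 : Q) (w : ℕ → A) : Prop :=
  Filter.limsup (fun n => Cor M q0 w n) Filter.atTop < ⊤

/-- The language of `M`. -/
def Lang (M : PACost Q A) : Set (ℕ → A) := { w | Accepting M M.qI w }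

/-- `M` is a finitary Büchi automaton: every transition is an increment-transition and
all colors are `1` or `2`. -/
def FinBuchi (M : PACost Q A) : Prop :=
  (∀ q a, M.Cst q a = true) ∧ ∀ q, M.Ω q = 1 ∨ M.Ω q = 2

end PACost

/-- The finite segment `w m, w (m+1), …, w (n-1)` of an infinite word `w`. -/
def seg {A : Type} (w : ℕ → A) (m n : ℕ) : List A :=
  (List.range (n - m)).map fun i => w (m + i)

namespace PACost

/-- Types of runs: `(first state, last state, max even color, max unanswered odd color,
increment occurred)`. -/
abbrev RType (Q : Type) := Q × Q × WithBot ℕ × WithBot ℕ × Bool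

variable {Q A : Type}

/-- The type of the non-empty finite run of `M` starting in `q` processing `l`. -/
def runType (M : PACost Q A) (q : Q) (l : List A) : RType Q :=
  let sts := List.scanl M.δ q l
  let st : ℕ → Q := fun j => sts.getD j q
  ( q,
    l.foldl M.δ q,
    ((Finset.range sts.length).filter fun j => Even (M.Ω (st j))).sup
      (fun j => (M.Ω (st j) : WithBot ℕ)),
    ((Finset.range sts.length).filter fun j =>
        Odd (M.Ω (st j)) ∧ ∀ j' < sts.length, j < j' →
          ¬(Even (M.Ω (st j')) ∧ M.Ω (st j) < M.Ω (st j'))).sup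
      (fun j => (M.Ω (st j) : WithBot ℕ)),
    (sts.zip l).any fun p => M.Cst p.1 p.2 )

/-- The type of the empty run prefix starting in `q`. -/
def InitT (M : PACost Q A) (q : Q) : RType Q :=
  ( q, q,
    if Even (M.Ω q) then (M.Ω q : WithBot ℕ) else ⊥,
    if Odd (M.Ω q) then (M.Ω q : WithBot ℕ) else ⊥,
    false )

/-- The type-update function. -/
def UpdT (M : PACost Q A) (t : RType Q) (a : A) : RType Q :=
  match t with
  | (q0, q1, c0, c1, ℓ) =>
    let q1' := M.δ q1 a
    ( q0, q1',
      if Even (M.Ω q1') then max c0 ((M.Ω q1' : WithBot ℕ)) else c0,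
      if Odd (M.Ω q1') then max c1 ((M.Ω q1' : WithBot ℕ))
      else if ∃ c : ℕ, c1 = (c : WithBot ℕ) ∧ M.Ω q1' ∈ M.Ans c then ⊥
      else c1,
      ℓ || M.Cst q1 a )

end PACost

/-!
Cut `ρ''` into its blocks `ρ_j^2`. Take an unanswered request at a late position `n` of `ρ''`,
in block `j`. If it is answered inside block `j`, the cost is at most `d`. Otherwise it is an
open request of block `j`, so the block of `ρ'` with the same type holds an open request of at
least the same color. In `ρ'` that request is answered with cost at most `b`, beyond the end
of block `j`, say in block `j'`. Because the maximal even color of block `j'` is part of the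
type, `ρ''` also answers in its block `j'`. The blocks strictly between `j` and `j'` cost at
most `b` in `ρ'`, so at most `b` of them contain an increment. The increment flag is also
part of the type, and every block of `ρ''` costs at most `d`, so in `ρ''` these blocks cost
at most `b * d`. Adding the first and the last block gives `(b + 2) * d`.
-/

lemma seg_eq_map_range' {A : Type} (w : ℕ → A) (m n : ℕ) :
    seg w m n = (List.range' m (n - m)).map w := by
  rw [seg, List.range'_eq_map_range, List.map_map]
  rfl

lemma List.zip_map_range'_succ {α β : Type*} (f : ℕ → α) (g : ℕ → β) (m k : ℕ) :
    ((List.range' m (k + 1)).map f).zip ((List.range' m k).map g) =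
      (List.range' m k).map fun p => (f p, g p) := by
  induction k generalizing m with
  | zero => simp
  | succ k ih =>
    rw [List.range'_succ (s := m) (n := k + 1), List.range'_succ (s := m) (n := k),
      List.map_cons, List.map_cons, List.zip_cons_cons, List.map_cons, ih (m + 1)]

lemma Finset.sup_filter_range_add {β : Type*} [SemilatticeSup β] [OrderBot β]
    (P : ℕ → Prop) [DecidablePred P] (f : ℕ → β) (m k : ℕ) :
    ((Finset.range (k + 1)).filter fun j => P (m + j)).sup (fun j => f (m + j)) =
      ((Finset.Icc m (m + k)).filter P).sup f := by
  have hIcc : Finset.Icc m (m + k) = (Finset.range (k + 1)).map (addLeftEmbedding m) := by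
    rw [Finset.range_eq_Ico, Finset.Ico_add_one_right_eq_Icc, Finset.map_add_left_Icc,
      Nat.add_zero]
  rw [hIcc, Finset.filter_map, Finset.sup_map]
  rfl

lemma ENat.eventually_le_of_limsup_le {α : Type*} {l : Filter α} {f : α → ℕ∞} {b : ℕ}
    (h : Filter.limsup f l ≤ b) : ∀ᶠ x in l, f x ≤ b := by
  filter_upwards [Filter.eventually_lt_of_limsup_lt
    (h.trans_lt (ENat.natCast_lt_natCast.2 b.lt_succ_self))] with x hx
  exact (ENat.lt_add_one_iff (ENat.natCast_ne_top b)).1 (by exact_mod_cast hx)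

lemma StrictMono.exists_block {φ : ℕ → ℕ} (hφ : StrictMono φ) {a x : ℕ} (hx : φ a < x) :
    ∃ j, a ≤ j ∧ φ j < x ∧ x ≤ φ (j + 1) := by
  have hshift : StrictMono fun i => φ (a + i) := hφ.comp (strictMono_id.const_add a)
  obtain ⟨i, h1, h2⟩ :=
    hshift.exists_between_of_tendsto_atTop hshift.tendsto_atTop (by simpa using hx)
  exact ⟨a + i, Nat.le_add_right a i, h1, h2⟩

namespace PACost

variable {Q A : Type} (M : PACost Q A) (q0 : Q) (w : ℕ → A)

abbrev colorAt (p : ℕ) : ℕ := M.Ω (M.stateAt q0 w p)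

/-- The component `c0` of the type of the run infix from position `m` to position `n`
(see `runType_seg`). -/
def maxEvenColor (m n : ℕ) : WithBot ℕ :=
  ((Finset.Icc m n).filter fun p => Even (M.colorAt q0 w p)).sup
    fun p => (M.colorAt q0 w p : WithBot ℕ)

def IsOpenRequest (n p : ℕ) : Prop :=
  Odd (M.colorAt q0 w p) ∧ ∀ p', p < p' → p' ≤ n →
    ¬(Even (M.colorAt q0 w p') ∧ M.colorAt q0 w p < M.colorAt q0 w p')

/-- The component `c1` of the type of the run infix from position `m` to position `n`. -/
def maxOpenRequest (m n : ℕ) : WithBot ℕ :=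
  ((Finset.Icc m n).filter (M.IsOpenRequest q0 w n)).sup
    fun p => (M.colorAt q0 w p : WithBot ℕ)

lemma scanl_δ_map_range' (m k : ℕ) :
    List.scanl M.δ (M.stateAt q0 w m) ((List.range' m k).map w) =
      (List.range' m (k + 1)).map (M.stateAt q0 w) := by
  induction k generalizing m with
  | zero => simp
  | succ k ih =>
    rw [List.range'_succ, List.map_cons, List.scanl_cons, List.range'_succ, List.map_cons]
    exact congrArg _ (ih (m + 1))

lemma foldl_δ_map_range' (m k : ℕ) :
    ((List.range' m k).map w).foldl M.δ (M.stateAt q0 w m) = M.stateAt q0 w (m + k) := by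
  induction k generalizing m with
  | zero => simp
  | succ k ih =>
    rw [List.range'_succ, List.map_cons, List.foldl_cons]
    exact (ih (m + 1)).trans (by rw [Nat.add_right_comm, Nat.add_assoc])

lemma isOpenRequest_add_iff (m j k : ℕ) :
    M.IsOpenRequest q0 w (m + k) (m + j) ↔
      Odd (M.colorAt q0 w (m + j)) ∧ ∀ j' < k + 1, j < j' →
        ¬(Even (M.colorAt q0 w (m + j')) ∧ M.colorAt q0 w (m + j) < M.colorAt q0 w (m + j')) := by
  refine and_congr_right fun _ => ⟨fun h j' hj' hjj' => h _ (by omega) (by omega), ?_⟩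
  intro h p' hp' hp'k
  obtain ⟨j', rfl⟩ := Nat.exists_eq_add_of_le (show m ≤ p' by omega)
  exact h j' (by omega) (by omega)

lemma runType_seg {m n : ℕ} (h : m ≤ n) :
    M.runType (M.stateAt q0 w m) (seg w m n) =
      (M.stateAt q0 w m, M.stateAt q0 w n, M.maxEvenColor q0 w m n, M.maxOpenRequest q0 w m n,
        decide (0 < M.segCost q0 w m n)) := by
  obtain ⟨k, rfl⟩ := Nat.exists_eq_add_of_le h
  have hst : ∀ j < k + 1,
      ((List.range' m (k + 1)).map (M.stateAt q0 w)).getD j (M.stateAt q0 w m) =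
        M.stateAt q0 w (m + j) := by
    intro j hj
    simp [List.getD_eq_getElem?_getD, hj]
  simp only [runType, seg_eq_map_range', Nat.add_sub_cancel_left, List.zip_map_range'_succ,
    scanl_δ_map_range', foldl_δ_map_range', List.length_map, List.length_range']
  simp only [Prod.mk.injEq, true_and]
  refine ⟨?_, ?_, ?_⟩
  · rw [maxEvenColor, ← Finset.sup_filter_range_add (fun p => Even (M.colorAt q0 w p))]
    refine Finset.sup_congr (Finset.filter_congr fun j hj => ?_) fun j hj => ?_
    · rw [hst j (Finset.mem_range.1 hj)]
    · rw [hst j (Finset.mem_range.1 (Finset.mem_filter.1 hj).1)]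
  · rw [maxOpenRequest, ← Finset.sup_filter_range_add (M.IsOpenRequest q0 w (m + k))]
    refine Finset.sup_congr (Finset.filter_congr fun j hj => ?_) fun j hj => ?_
    · rw [isOpenRequest_add_iff, hst j (Finset.mem_range.1 hj)]
      refine and_congr_right fun _ => forall₂_congr fun j' hj' => ?_
      rw [hst j' hj']
    · rw [hst j (Finset.mem_range.1 (Finset.mem_filter.1 hj).1)]
  · rw [Bool.eq_iff_iff]
    simp [segCost, Finset.card_pos, Finset.filter_nonempty_iff]

lemma segCost_le_sub (m n : ℕ) : M.segCost q0 w m n ≤ n - m :=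
  (Finset.card_filter_le _ _).trans (Nat.card_Ico m n).le

lemma segCost_add {m n p : ℕ} (hmn : m ≤ n) (hnp : n ≤ p) :
    M.segCost q0 w m n + M.segCost q0 w n p = M.segCost q0 w m p := by
  rw [segCost, segCost, ← Finset.card_union_of_disjoint
    (Finset.disjoint_filter_filter (Finset.Ico_disjoint_Ico_consecutive m n p)),
    ← Finset.filter_union, Finset.Ico_union_Ico_eq_Ico hmn hnp, segCost]

lemma segCost_mono {m m' n n' : ℕ} (hm : m' ≤ m) (hn : n ≤ n') :
    M.segCost q0 w m n ≤ M.segCost q0 w m' n' :=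
  Finset.card_le_card (Finset.filter_subset_filter _ (Finset.Ico_subset_Ico hm hn))

lemma segCost_eq_sum_blocks {φ : ℕ → ℕ} (hφ : Monotone φ) {a b : ℕ} (hab : a ≤ b) :
    M.segCost q0 w (φ a) (φ b) = ∑ i ∈ Finset.Ico a b, M.segCost q0 w (φ i) (φ (i + 1)) := by
  induction b, hab using Nat.le_induction with
  | base => simp [segCost]
  | succ b hab ih =>
    rw [Finset.sum_Ico_succ_top hab, ← ih, segCost_add M q0 w (hφ hab) (hφ b.le_succ)]

lemma Cor_le_segCost {n p : ℕ} (hnp : n < p) (heven : Even (M.colorAt q0 w p))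
    (hlt : M.colorAt q0 w n < M.colorAt q0 w p) : M.Cor q0 w n ≤ M.segCost q0 w n p := by
  rw [Cor]
  split_ifs
  · exact zero_le
  · exact sInf_le ⟨p, hnp, ⟨⟨_, rfl⟩, hlt, heven⟩, rfl⟩

lemma exists_answer_of_Cor_le {n b : ℕ} (hodd : Odd (M.colorAt q0 w n))
    (h : M.Cor q0 w n ≤ b) :
    ∃ p, n < p ∧ Even (M.colorAt q0 w p) ∧ M.colorAt q0 w n < M.colorAt q0 w p ∧
      M.segCost q0 w n p ≤ b := by
  rw [Cor, if_neg (Nat.not_even_iff_odd.2 hodd)] at h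
  obtain ⟨_, ⟨p, hnp, ⟨-, hlt, heven⟩, rfl⟩, hp⟩ :=
    sInf_lt_iff.1 (h.trans_lt (ENat.natCast_lt_natCast.2 b.lt_succ_self))
  exact ⟨p, hnp, heven, hlt, Nat.lt_succ_iff.1 (by exact_mod_cast hp)⟩

lemma exists_answering_block {φ : ℕ → ℕ} (hφ : StrictMono φ) {b j c : ℕ}
    (hb : ∀ m ≥ φ j, M.Cor q0 w m ≤ b)
    (hc : (c : WithBot ℕ) ≤ M.maxOpenRequest q0 w (φ j) (φ (j + 1))) :
    ∃ j', j < j' ∧ (c : WithBot ℕ) < M.maxEvenColor q0 w (φ j') (φ (j' + 1)) ∧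
      M.segCost q0 w (φ (j + 1)) (φ j') ≤ b := by
  obtain ⟨m, hm, hcm⟩ := (Finset.le_sup_iff (WithBot.bot_lt_coe c)).1 hc
  obtain ⟨hm, hodd, hopen⟩ := Finset.mem_filter.1 hm
  obtain ⟨hjm, hmj⟩ := Finset.mem_Icc.1 hm
  obtain ⟨n', hmn', heven, hlt, hcost⟩ := M.exists_answer_of_Cor_le q0 w hodd (hb m hjm)
  have hn' : φ (j + 1) < n' := lt_of_not_ge fun h => hopen n' hmn' h ⟨heven, hlt⟩
  obtain ⟨j', hjj', hj'n', hn'j'⟩ := hφ.exists_block hn'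
  refine ⟨j', hjj', ?_, (M.segCost_mono q0 w hmj hj'n'.le).trans hcost⟩
  calc (c : WithBot ℕ) ≤ M.colorAt q0 w m := hcm
    _ < M.colorAt q0 w n' := WithBot.coe_lt_coe.2 hlt
    _ ≤ M.maxEvenColor q0 w (φ j') (φ (j' + 1)) :=
      Finset.le_sup (f := fun p => (M.colorAt q0 w p : WithBot ℕ))
        (Finset.mem_filter.2 ⟨Finset.mem_Icc.2 ⟨hj'n'.le, hn'j'⟩, heven⟩)

lemma segCost_le_of_mem_blocks {φ : ℕ → ℕ} (hφ : Monotone φ) {d : ℕ}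
    (hd : ∀ j, φ (j + 1) - φ j ≤ d) {j j' n p : ℕ} (hjj' : j < j') (hjn : φ j ≤ n)
    (hnj : n ≤ φ (j + 1)) (hpj' : p ≤ φ (j' + 1)) :
    M.segCost q0 w n p ≤ d + M.segCost q0 w (φ (j + 1)) (φ j') + d := by
  have hmid : φ (j + 1) ≤ φ j' := hφ hjj'
  have hlast : φ j' ≤ φ (j' + 1) := hφ j'.le_succ
  have hfirst := M.segCost_le_sub q0 w n (φ (j + 1))
  have hend := M.segCost_le_sub q0 w (φ j') (φ (j' + 1))
  have := hd j
  have := hd j'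
  calc M.segCost q0 w n p ≤ M.segCost q0 w n (φ (j' + 1)) := M.segCost_mono q0 w le_rfl hpj'
    _ = M.segCost q0 w n (φ (j + 1)) + M.segCost q0 w (φ (j + 1)) (φ j') +
        M.segCost q0 w (φ j') (φ (j' + 1)) := by
      rw [M.segCost_add q0 w hnj hmid, M.segCost_add q0 w (hnj.trans hmid) hlast]
    _ ≤ d + M.segCost q0 w (φ (j + 1)) (φ j') + d := by omega

section TwoRuns

variable {q1 q2 : Q} {w1 w2 : ℕ → A} {φ1 φ2 : ℕ → ℕ}

lemma runType_seg_eq_runType_seg_iff {m1 n1 m2 n2 : ℕ} (h1 : m1 ≤ n1) (h2 : m2 ≤ n2) :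
    M.runType (M.stateAt q1 w1 m1) (seg w1 m1 n1) =
        M.runType (M.stateAt q2 w2 m2) (seg w2 m2 n2) ↔
      M.stateAt q1 w1 m1 = M.stateAt q2 w2 m2 ∧ M.stateAt q1 w1 n1 = M.stateAt q2 w2 n2 ∧
        M.maxEvenColor q1 w1 m1 n1 = M.maxEvenColor q2 w2 m2 n2 ∧
        M.maxOpenRequest q1 w1 m1 n1 = M.maxOpenRequest q2 w2 m2 n2 ∧
        (0 < M.segCost q1 w1 m1 n1 ↔ 0 < M.segCost q2 w2 m2 n2) := by
  rw [M.runType_seg q1 w1 h1, M.runType_seg q2 w2 h2]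
  simp only [Prod.mk.injEq, decide_eq_decide]

lemma segCost_le_mul_segCost (hφ1 : Monotone φ1) (hφ2 : Monotone φ2) {d : ℕ}
    (hd : ∀ i, φ2 (i + 1) - φ2 i ≤ d)
    (hinc : ∀ i, 0 < M.segCost q2 w2 (φ2 i) (φ2 (i + 1)) → 0 < M.segCost q1 w1 (φ1 i) (φ1 (i + 1)))
    {a b : ℕ} (hab : a ≤ b) :
    M.segCost q2 w2 (φ2 a) (φ2 b) ≤ d * M.segCost q1 w1 (φ1 a) (φ1 b) := by
  rw [M.segCost_eq_sum_blocks q2 w2 hφ2 hab, M.segCost_eq_sum_blocks q1 w1 hφ1 hab, Finset.mul_sum]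
  refine Finset.sum_le_sum fun i _ => ?_
  rcases Nat.eq_zero_or_pos (M.segCost q2 w2 (φ2 i) (φ2 (i + 1))) with h0 | hpos
  · exact h0 ▸ zero_le
  · calc M.segCost q2 w2 (φ2 i) (φ2 (i + 1)) ≤ φ2 (i + 1) - φ2 i := M.segCost_le_sub q2 w2 _ _
      _ ≤ d := hd i
      _ ≤ d * M.segCost q1 w1 (φ1 i) (φ1 (i + 1)) := Nat.le_mul_of_pos_right d (hinc i hpos)

lemma Cor_le_of_runType_eq (hφ1 : StrictMono φ1) (hφ2 : StrictMono φ2)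
    (htype : ∀ j, M.runType (M.stateAt q1 w1 (φ1 j)) (seg w1 (φ1 j) (φ1 (j + 1)))
      = M.runType (M.stateAt q2 w2 (φ2 j)) (seg w2 (φ2 j) (φ2 (j + 1))))
    {d : ℕ} (hd : ∀ j, φ2 (j + 1) - φ2 j ≤ d) {b N : ℕ} (hb : ∀ m ≥ N, M.Cor q1 w1 m ≤ b)
    {n : ℕ} (hn : φ2 N < n) : M.Cor q2 w2 n ≤ ((b + 2) * d : ℕ) := by
  have hT := fun i => (M.runType_seg_eq_runType_seg_iff (hφ1 i.lt_succ_self).le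
    (hφ2 i.lt_succ_self).le).1 (htype i)
  obtain ⟨j, hNj, hjn, hnj⟩ := hφ2.exists_block hn
  by_cases hev : Even (M.colorAt q2 w2 n)
  · simp [Cor, hev]
  by_cases hans : ∃ p, n < p ∧ p ≤ φ2 (j + 1) ∧ Even (M.colorAt q2 w2 p) ∧
      M.colorAt q2 w2 n < M.colorAt q2 w2 p
  · obtain ⟨p, hnp, hpj, hpe, hlt⟩ := hans
    have := M.segCost_le_sub q2 w2 n p
    have := hd j
    have : d ≤ (b + 2) * d := Nat.le_mul_of_pos_left d (by omega)
    calc M.Cor q2 w2 n ≤ M.segCost q2 w2 n p := M.Cor_le_segCost q2 w2 hnp hpe hlt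
      _ ≤ ((b + 2) * d : ℕ) := by exact_mod_cast (by omega : M.segCost q2 w2 n p ≤ (b + 2) * d)
  push Not at hans
  have hreq : (M.colorAt q2 w2 n : WithBot ℕ) ≤ M.maxOpenRequest q2 w2 (φ2 j) (φ2 (j + 1)) :=
    Finset.le_sup (f := fun p => (M.colorAt q2 w2 p : WithBot ℕ)) (Finset.mem_filter.2
      ⟨Finset.mem_Icc.2 ⟨hjn.le, hnj⟩, Nat.not_even_iff_odd.1 hev,
        fun p h1 h2 hp => (hans p h1 h2 hp.1).not_gt hp.2⟩)
  obtain ⟨-, -, -, hopen_j, -⟩ := hT j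
  rw [← hopen_j] at hreq
  obtain ⟨j', hjj', hlt, hcost⟩ := M.exists_answering_block q1 w1 hφ1
    (fun m hm => hb m (hNj.trans ((hφ1.id_le j).trans hm))) hreq
  obtain ⟨-, -, heven_j', -, -⟩ := hT j'
  rw [heven_j'] at hlt
  obtain ⟨p, hp, hcolor⟩ := Finset.lt_sup_iff.1 hlt
  obtain ⟨hp, hpe⟩ := Finset.mem_filter.1 hp
  obtain ⟨hjp, hpj⟩ := Finset.mem_Icc.1 hp
  replace hcolor := WithBot.coe_lt_coe.1 hcolor
  have hnp : n < p := lt_of_le_of_ne (hnj.trans ((hφ2.monotone hjj').trans hjp))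
    (by rintro rfl; exact lt_irrefl _ hcolor)
  have hmid := M.segCost_le_mul_segCost hφ1.monotone hφ2.monotone hd
    (fun i => (hT i).2.2.2.2.2) hjj'
  have hcost2 := M.segCost_le_of_mem_blocks q2 w2 hφ2.monotone hd hjj' hjn.le hnj hpj
  calc M.Cor q2 w2 n ≤ M.segCost q2 w2 n p := M.Cor_le_segCost q2 w2 hnp hpe hcolor
    _ ≤ ((b + 2) * d : ℕ) := by
      have := Nat.mul_le_mul_left d hcost
      exact_mod_cast (by linarith : M.segCost q2 w2 n p ≤ (b + 2) * d)

end TwoRuns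

end PACost

theorem statement0_general {Q A : Type} (M : PACost Q A)
    (q1 q2 : Q) (w1 w2 : ℕ → A) (φ1 φ2 : ℕ → ℕ)
    (hmono1 : StrictMono φ1) (hmono2 : StrictMono φ2)
    (htype : ∀ j, M.runType (M.stateAt q1 w1 (φ1 j)) (seg w1 (φ1 j) (φ1 (j + 1)))
               = M.runType (M.stateAt q2 w2 (φ2 j)) (seg w2 (φ2 j) (φ2 (j + 1))))
    (d : ℕ) (hd : IsLUB (Set.range fun j => φ2 (j + 1) - φ2 j) d) :
    (∀ b : ℕ, Filter.limsup (fun n => M.Cor q1 w1 n) Filter.atTop ≤ (b : ℕ∞) →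
        Filter.limsup (fun n => M.Cor q2 w2 n) Filter.atTop ≤ (((b + 2) * d : ℕ) : ℕ∞)) ∧
    (M.Accepting q1 w1 → M.Accepting q2 w2) := by
  have hbound : ∀ b : ℕ, Filter.limsup (fun n => M.Cor q1 w1 n) Filter.atTop ≤ (b : ℕ∞) →
      Filter.limsup (fun n => M.Cor q2 w2 n) Filter.atTop ≤ (((b + 2) * d : ℕ) : ℕ∞) := by
    intro b hb
    obtain ⟨N, hN⟩ := Filter.eventually_atTop.1 (ENat.eventually_le_of_limsup_le hb)
    refine Filter.limsup_le_of_le (by isBoundedDefault)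
      (Filter.eventually_atTop.2 ⟨φ2 N + 1, fun n hn => ?_⟩)
    exact M.Cor_le_of_runType_eq hmono1 hmono2 htype (fun j => hd.1 ⟨j, rfl⟩) hN hn
  refine ⟨hbound, fun hacc => ?_⟩
  obtain ⟨b, hb⟩ := WithTop.ne_top_iff_exists.1 (lt_top_iff_ne_top.1 hacc)
  exact (hbound b hb.symm.le).trans_lt (ENat.natCast_lt_top _)

/-- run replacement lemma. The run `ρ'` of `M` on `w1` from `q1` is cut by
`φ1` into the non-empty finite runs `ρ_j^1`, and the run `ρ''` of `M` on `w2` from `q2` is cut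
by `φ2` into the non-empty finite runs `ρ_j^2`; corresponding pieces have the same type, and
`sup_j |ρ_j^2| = d`. If `limsup_n Cor(ρ', n) ≤ b` then `limsup_n Cor(ρ'', n) ≤ (b+2)·d`;
in particular, if `ρ'` is accepting then so is `ρ''`. -/
theorem statement0 {Q A : Type} [Fintype Q] [Fintype A] (M : PACost Q A)
    (q1 q2 : Q) (w1 w2 : ℕ → A) (φ1 φ2 : ℕ → ℕ)
    (hmono1 : StrictMono φ1) (hmono2 : StrictMono φ2)
    (h01 : φ1 0 = 0) (h02 : φ2 0 = 0)
    (htype : ∀ j, M.runType (M.stateAt q1 w1 (φ1 j)) (seg w1 (φ1 j) (φ1 (j + 1)))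
               = M.runType (M.stateAt q2 w2 (φ2 j)) (seg w2 (φ2 j) (φ2 (j + 1))))
    (d : ℕ) (hd : IsLUB (Set.range fun j => φ2 (j + 1) - φ2 j) d) :
    (∀ b : ℕ, Filter.limsup (fun n => M.Cor q1 w1 n) Filter.atTop ≤ (b : ℕ∞) →
        Filter.limsup (fun n => M.Cor q2 w2 n) Filter.atTop ≤ (((b + 2) * d : ℕ) : ℕ∞)) ∧
    (M.Accepting q1 w1 → M.Accepting q2 w2) :=
  statement0_general M q1 q2 w1 w2 φ1 φ2 hmono1 hmono2 htype d hd
end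
end

section
/- There is a constant c > 0 such that for every n > 1 there exists a finitary Büchi automaton A_n over the alphabet Σ_I × Σ_O with Σ_I = Σ_O = {1, …, n, #}, with at most c·n states, such that: (i) for every delay function f, Player O wins Γ_f(L(A_n)) if, and only if, f(0) ≥ 2^n + 1; and (ii) for every delay function f with f(0) ≥ 2^n + 1, an optimal winning strategy for Player O in Γ_f(L(A_n)) exists and has cost exactly 2^n + 1. -/
attribute [local instance] Classical.propDecidable

noncomputable section

section DelayGames

variable {I O : Type}

/-- The `n`-th letter of the concatenation `u 0 ++ u 1 ++ u 2 ++ ⋯`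
(well-defined whenever all blocks are non-empty). -/
def flatWord [Inhabited I] (u : ℕ → List I) (n : ℕ) : I :=
  (((List.range (n + 1)).map u).flatten).getD n default

/-- A delay function maps every round to a positive number of letters. -/
def DelayFn (f : ℕ → ℕ) : Prop := ∀ i, 0 < f i

/-- The constant delay function `f_k` with `f_k 0 = k + 1` and `f_k i = 1` for `i > 0`. -/
def constDF (k : ℕ) : ℕ → ℕ := fun i => if i = 0 then k + 1 else 1

/-- The sequence of letters Player I has produced up to (and including) round `i`. -/
def oHist (u : ℕ → List I) (i : ℕ) : List I := ((List.range (i + 1)).map u).flatten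

/-- `τO` is a winning strategy for Player O in the delay game with delay function `f`
and winning condition `L`. -/
def OWinning [Inhabited I] (f : ℕ → ℕ) (L : Set (ℕ → I × O)) (τO : List I → O) : Prop :=
  ∀ u : ℕ → List I, ∀ v : ℕ → O,
    (∀ i, (u i).length = f i) →
    (∀ i, v i = τO (oHist u i)) →
    (fun n => (flatWord u n, v n)) ∈ L

/-- Player O wins the delay game `Γ_f(L)`. -/
def OWins [Inhabited I] (f : ℕ → ℕ) (L : Set (ℕ → I × O)) : Prop :=
  ∃ τO : List I → O, OWinning f L τO

/-- `τI` is a winning strategy for Player I in the delay game with delay function `f`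
and winning condition `L`. -/
def IWinning [Inhabited I] (f : ℕ → ℕ) (L : Set (ℕ → I × O)) (τI : List O → List I) : Prop :=
  (∀ w, (τI w).length = f w.length) ∧
  ∀ u : ℕ → List I, ∀ v : ℕ → O,
    (∀ i, u i = τI ((List.range i).map v)) →
    (fun n => (flatWord u n, v n)) ∉ L

/-- Player I wins the delay game `Γ_f(L)`. -/
def IWins [Inhabited I] (f : ℕ → ℕ) (L : Set (ℕ → I × O)) : Prop :=
  ∃ τI : List O → List I, IWinning f L τI

/-- The cost of a strategy `τO` of Player O: the supremum of the word-costs `wc` of the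
outcomes of plays consistent with `τO`. -/
def stratCost [Inhabited I] (wc : (ℕ → I × O) → ℕ∞) (f : ℕ → ℕ) (τO : List I → O) : ℕ∞ :=
  ⨆ (u : ℕ → List I) (v : ℕ → O)
    (_ : (∀ i, (u i).length = f i) ∧ ∀ i, v i = τO (oHist u i)),
    wc (fun n => (flatWord u n, v n))

/-- An optimal winning strategy for Player O in `Γ_f(L)` exists and has cost `c`. -/
def OptimalCostIs [Inhabited I] (L : Set (ℕ → I × O)) (wc : (ℕ → I × O) → ℕ∞)
    (f : ℕ → ℕ) (c : ℕ∞) : Prop :=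
  (∃ τO, OWinning f L τO ∧ stratCost wc f τO = c) ∧
  ∀ τO, OWinning f L τO → c ≤ stratCost wc f τO

end DelayGames

/-- The cost `limsup_n Cor(ρ(w), n)` of the run of `M` on an infinite word `w`. -/
def PACost.wCost {Q I O : Type} (M : PACost Q (I × O)) : (ℕ → I × O) → ℕ∞ :=
  fun w => Filter.limsup (fun n => PACost.Cor M M.qI w n) Filter.atTop

/-!
At the start of every block of input letters, Player O must announce either the last letter of
the block or a *flaw* in it: two equal letters with only smaller letters in between.  The
automaton checks the announcement and returns to its only even-colored state right after the
block, so costs measure block lengths.  Every `#`-free word of `2 ^ n` letters over an alphabet of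
`n` letters has a flaw, so with lookahead `2 ^ n + 1` Player O can always announce correctly, at
cost at most `2 ^ n + 1`.  Conversely the ruler sequence `ν₂(t + 1)` of length `2 ^ n - 1` has no
flaw, so on a ruler block Player O has to announce the last letter: this needs lookahead
`2 ^ n + 1`, and infinitely many ruler blocks force cost `2 ^ n + 1`.
-/

namespace PACost

variable {Q Q' A : Type}

section Relabel

def relabel (M : PACost Q A) (e : Q ≃ Q') : PACost Q' A where
  qI := e M.qI
  δ q a := e (M.δ (e.symm q) a)
  Ω q := M.Ω (e.symm q)
  Cst q a := M.Cst (e.symm q) a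

variable (M : PACost Q A) (e : Q ≃ Q')

theorem stateAt_relabel (q0 : Q) (w : ℕ → A) (n : ℕ) :
    (M.relabel e).stateAt (e q0) w n = e (M.stateAt q0 w n) := by
  induction n with
  | zero => rfl
  | succ n ih => simp only [stateAt, ih]; simp [relabel]

theorem cor_relabel (q0 : Q) (w : ℕ → A) (n : ℕ) :
    (M.relabel e).Cor (e q0) w n = M.Cor q0 w n := by
  have hseg : ∀ m k, (M.relabel e).segCost (e q0) w m k = M.segCost q0 w m k := by
    intro m k
    simp only [segCost, stateAt_relabel]
    simp [relabel]
  have hAns : ∀ c, (M.relabel e).Ans c = M.Ans c := by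
    intro c
    ext c'
    simp only [Ans, relabel, Set.mem_ofPred_eq, e.symm.surjective.exists]
  simp only [Cor, hseg, hAns, stateAt_relabel]
  simp [relabel]

theorem lang_relabel : (M.relabel e).Lang = M.Lang := by
  ext w
  simp only [Lang, Accepting, Set.mem_ofPred_eq]
  simp only [relabel, ← cor_relabel M e]

theorem wCost_relabel {I O : Type} (M : PACost Q (I × O)) (e : Q ≃ Q') :
    (M.relabel e).wCost = M.wCost :=
  funext fun w => congrArg (Filter.limsup · _) (funext (cor_relabel M e M.qI w))

theorem FinBuchi.relabel {M : PACost Q A} (hM : M.FinBuchi) : (M.relabel e).FinBuchi :=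
  ⟨fun _ a => hM.1 _ a, fun _ => hM.2 _⟩

end Relabel

variable {M : PACost Q A} {q0 : Q} {w : ℕ → A}

theorem cor_eq_zero {p : ℕ} (h : Even (M.Ω (M.stateAt q0 w p))) : M.Cor q0 w p = 0 :=
  if_pos h

theorem FinBuchi.segCost_eq (hM : M.FinBuchi) (m k : ℕ) : M.segCost q0 w m k = k - m := by
  simp [segCost, hM.1]

theorem FinBuchi.cor_eq_sInf (hM : M.FinBuchi) {p : ℕ} (hp : M.Ω (M.stateAt q0 w p) = 1) :
    M.Cor q0 w p =
      sInf {c : ℕ∞ | ∃ q, p < q ∧ M.Ω (M.stateAt q0 w q) = 2 ∧ c = (q - p : ℕ)} := by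
  have hAns : ∀ q, M.Ω (M.stateAt q0 w q) ∈ M.Ans 1 ↔ M.Ω (M.stateAt q0 w q) = 2 := by
    intro q
    rcases hM.2 (M.stateAt q0 w q) with h | h
    · simp [Ans, h]
    · simpa [Ans, h] using ⟨_, h⟩
  simp [Cor, hp, hAns, hM.segCost_eq]

theorem FinBuchi.cor_le (hM : M.FinBuchi) {p q : ℕ} (hpq : p < q)
    (hq : M.Ω (M.stateAt q0 w q) = 2) : M.Cor q0 w p ≤ (q - p : ℕ) := by
  rcases hM.2 (M.stateAt q0 w p) with hp | hp
  · rw [hM.cor_eq_sInf hp]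
    exact sInf_le ⟨q, hpq, hq, rfl⟩
  · simp [Cor, hp]

theorem FinBuchi.cor_eq (hM : M.FinBuchi) {p q : ℕ} (hpq : p < q)
    (hp : M.Ω (M.stateAt q0 w p) = 1) (hq : M.Ω (M.stateAt q0 w q) = 2)
    (hbetween : ∀ r, p < r → r < q → M.Ω (M.stateAt q0 w r) = 1) :
    M.Cor q0 w p = (q - p : ℕ) := by
  refine le_antisymm (hM.cor_le hpq hq) ?_
  rw [hM.cor_eq_sInf hp]
  refine le_sInf ?_
  rintro c ⟨r, hpr, hr, rfl⟩
  have : q ≤ r := by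
    by_contra! hrq
    simp [hbetween r hpr hrq] at hr
  exact_mod_cast Nat.sub_le_sub_right this p

theorem FinBuchi.not_accepting (hM : M.FinBuchi) {p₀ : ℕ}
    (hodd : ∀ p, p₀ ≤ p → M.Ω (M.stateAt q0 w p) = 1) : ¬ M.Accepting q0 w := by
  have htop : ∀ p, p₀ ≤ p → M.Cor q0 w p = ⊤ := by
    intro p hp
    rw [hM.cor_eq_sInf (hodd p hp), sInf_eq_top]
    rintro c ⟨q, hpq, hq, -⟩
    simp [hodd q (by omega)] at hq
  have hlim : Filter.limsup (M.Cor q0 w) Filter.atTop = ⊤ := by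
    rw [Filter.limsup_congr (Filter.eventually_atTop.2 ⟨p₀, htop⟩), Filter.limsup_const]
  simp [Accepting, hlim]

end PACost

def IsFlaw {β : Type} [LE β] (x : ℕ → β) (p s : ℕ) : Prop :=
  p < s ∧ x p = x s ∧ ∀ r, p < r → r < s → x r ≤ x p

theorem IsFlaw.congr {β : Type} [LE β] {x y : ℕ → β} {p s : ℕ} (h : IsFlaw x p s)
    (hxy : ∀ r, p ≤ r → r ≤ s → x r = y r) : IsFlaw y p s := by
  obtain ⟨hps, heq, hle⟩ := h
  refine ⟨hps, ?_, fun r h1 h2 => ?_⟩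
  · rw [← hxy p le_rfl hps.le, ← hxy s hps.le le_rfl, heq]
  · rw [← hxy p le_rfl hps.le, ← hxy r h1.le h2.le]
    exact hle r h1 h2

theorem IsFlaw.comp_add {β : Type} [LE β] {x : ℕ → β} {b p s : ℕ}
    (h : IsFlaw x (b + p) (b + s)) : IsFlaw (fun t => x (b + t)) p s :=
  ⟨by have := h.1; omega, h.2.1, fun r h1 h2 => h.2.2 (b + r) (by omega) (by omega)⟩

theorem isFlaw_val_iff {n : ℕ} {x : ℕ → Fin n} {p s : ℕ} :
    IsFlaw (fun r => (x r).val) p s ↔ IsFlaw x p s := by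
  simp only [IsFlaw, Fin.val_inj, Fin.le_def]

theorem exists_isFlaw (x : ℕ → ℕ) (k : ℕ) {a b : ℕ} (hab : a + 2 ^ k ≤ b)
    (hx : ∀ r, a ≤ r → r < b → x r < k) : ∃ p s, a ≤ p ∧ s < b ∧ IsFlaw x p s := by
  induction k generalizing a b with
  | zero => exact absurd (hx a le_rfl (by simpa using hab)) (Nat.not_lt_zero _)
  | succ k ih =>
    have hpow : 2 ^ (k + 1) = 2 ^ k + 2 ^ k := by ring
    have hpos : 0 < 2 ^ k := by positivity
    by_cases htwo : ∃ p s, a ≤ p ∧ p < s ∧ s < b ∧ x p = k ∧ x s = k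
    · obtain ⟨p, s, hap, hps, hsb, hp, hs⟩ := htwo
      refine ⟨p, s, hap, hsb, hps, hp.trans hs.symm, fun r hpr hrs => ?_⟩
      have := hx r (by omega) (by omega)
      omega
    obtain ⟨m, ham, hmb, hm⟩ : ∃ m, a ≤ m ∧ m ≤ b ∧ ∀ r, a ≤ r → r < b → r ≠ m → x r < k := by
      by_cases hone : ∃ m, a ≤ m ∧ m < b ∧ x m = k
      · obtain ⟨m, ham, hmb, hm⟩ := hone
        refine ⟨m, ham, hmb.le, fun r har hrb hrm => ?_⟩
        have := hx r har hrb
        rcases Nat.lt_or_gt_of_ne hrm with h | h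
        · have : x r ≠ k := fun hr => htwo ⟨r, m, har, h, hmb, hr, hm⟩
          omega
        · have : x r ≠ k := fun hr => htwo ⟨m, r, ham, h, hrb, hm, hr⟩
          omega
      · push Not at hone
        refine ⟨b, by omega, le_rfl, fun r har hrb _ => ?_⟩
        have := hx r har hrb
        have := hone r har hrb
        omega
    by_cases hleft : a + 2 ^ k ≤ m
    · obtain ⟨p, s, hap, hsm, hflaw⟩ := ih hleft fun r har hrm => hm r har (by omega) (by omega)
      exact ⟨p, s, hap, by omega, hflaw⟩
    · obtain ⟨p, s, hmp, hsb, hflaw⟩ :=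
        ih (a := m + 1) (by omega) fun r hmr hrb => hm r (by omega) hrb (by omega)
      exact ⟨p, s, by omega, hsb, hflaw⟩

/-- The ruler sequence `0, 1, 0, 2, 0, 1, 0, 3, …`. -/
def ruler (t : ℕ) : ℕ := padicValNat 2 (t + 1)

theorem ruler_lt {t k : ℕ} (h : t + 1 < 2 ^ k) : ruler t < k := by
  by_contra! hk
  have := Nat.le_of_dvd (Nat.succ_pos t) ((pow_dvd_pow 2 hk).trans pow_padicValNat_dvd)
  omega

theorem ruler_two_pow_sub_two {k : ℕ} (hk : 0 < k) : ruler (2 ^ k - 2) = 0 := by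
  have : 2 ≤ 2 ^ k := Nat.le_self_pow hk.ne' 2
  have : 2 ∣ 2 ^ k := dvd_pow_self 2 hk.ne'
  exact padicValNat.eq_zero_of_not_dvd (by omega)

theorem ruler_not_isFlaw (p s : ℕ) : ¬ IsFlaw ruler p s := by
  rintro ⟨hps, heq, hle⟩
  set j := ruler p
  -- write `p + 1 = 2^j a` and `s + 1 = 2^j b` with `a, b` odd; `2^j (a + 1)` lies in between
  have hodd : ∀ t c, ruler t = j → t + 1 = 2 ^ j * c → ¬ 2 ∣ c := by
    rintro t c ht hc ⟨d, rfl⟩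
    refine pow_succ_padicValNat_not_dvd (p := 2) (Nat.succ_ne_zero t) ⟨d, ?_⟩
    rw [← ruler, ht, Nat.succ_eq_add_one, hc]
    ring
  obtain ⟨a, ha⟩ : 2 ^ j ∣ p + 1 := pow_padicValNat_dvd
  obtain ⟨b, hb⟩ : 2 ^ j ∣ s + 1 := heq ▸ pow_padicValNat_dvd
  have hpos : 0 < 2 ^ j := by positivity
  have hab : a + 2 ≤ b := by
    have : a < b := Nat.lt_of_mul_lt_mul_left (a := 2 ^ j) (by omega)
    have := hodd p a rfl ha
    have := hodd s b heq.symm hb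
    omega
  have hmid := Nat.mul_le_mul_left (2 ^ j) hab
  have heven : 2 ∣ a + 1 := by have := hodd p a rfl ha; omega
  have hr : j + 1 ≤ ruler (2 ^ j * (a + 1) - 1) := by
    rw [ruler, Nat.sub_add_cancel (Nat.one_le_iff_ne_zero.2 (by positivity))]
    refine (padicValNat_dvd_iff_le (by positivity)).1 ?_
    rw [pow_succ]
    exact Nat.mul_dvd_mul_left _ heven
  rw [mul_add] at hmid hr
  have := hle (2 ^ j * a + 2 ^ j * 1 - 1) (by omega) (by omega)
  omega

def FlagAt {β : Type} [LE β] (α : ℕ → β) (j : β) (b e : ℕ) : Prop :=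
  ∃ p, b ≤ p ∧ p < e ∧ α p = j ∧ ∀ r, p < r → r < e → α r ≤ j

theorem flagAt_succ {β : Type} [LinearOrder β] {α : ℕ → β} {j : β} {b e : ℕ} (hbe : b ≤ e) :
    FlagAt α j b (e + 1) ↔ α e = j ∨ FlagAt α j b e ∧ α e < j := by
  constructor
  · rintro ⟨p, hbp, hpe, hp, hle⟩
    rcases (Nat.lt_succ_iff.1 hpe).eq_or_lt with rfl | hpe
    · exact .inl hp
    · refine or_iff_not_imp_left.2 fun hne =>
        ⟨⟨p, hbp, hpe, hp, fun r h1 h2 => hle r h1 (by omega)⟩,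
          lt_of_le_of_ne (hle e hpe (by omega)) hne⟩
  · rintro (he | ⟨⟨p, hbp, hpe, hp, hle⟩, he⟩)
    · exact ⟨e, hbe, by omega, he, fun r h1 h2 => by omega⟩
    · refine ⟨p, hbp, by omega, hp, fun r h1 h2 => ?_⟩
      rcases (Nat.lt_succ_iff.1 h2).eq_or_lt with rfl | h2
      · exact he.le
      · exact hle r h1 h2

theorem exists_near_of_gaps {P : ℕ → Prop} {d : ℕ} (h0 : P 0)
    (hgap : ∀ m, P m → ∃ m', m < m' ∧ m' ≤ m + d + 1 ∧ P m') (p : ℕ) :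
    P p ∨ ∃ q, p < q ∧ q ≤ p + d ∧ P q := by
  induction p with
  | zero => exact .inl h0
  | succ p ih =>
    have hnext : ∀ q, p < q → q ≤ p + d + 1 → P q →
        P (p + 1) ∨ ∃ q, p + 1 < q ∧ q ≤ p + 1 + d ∧ P q := fun q h1 h2 hq =>
      (Nat.succ_le_of_lt h1).eq_or_lt.imp (fun h : p + 1 = q => h ▸ hq)
        fun h => ⟨q, h, by omega, hq⟩
    rcases ih with hp | ⟨q, h1, h2, hq⟩
    · obtain ⟨q, h1, h2, hq⟩ := hgap p hp
      exact hnext q h1 h2 hq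
    · exact hnext q h1 (by omega) hq

section DelayGames

variable {I O : Type} {f : ℕ → ℕ}

def blockStart (f : ℕ → ℕ) : ℕ → ℕ
  | 0 => 0
  | i + 1 => blockStart f i + f i

theorem DelayFn.blockStart_strictMono (hf : DelayFn f) : StrictMono (blockStart f) :=
  strictMono_nat_of_lt_succ fun i => Nat.lt_add_of_pos_right (hf i)

theorem DelayFn.lt_blockStart_succ (hf : DelayFn f) (i : ℕ) : i < blockStart f (i + 1) :=
  Nat.lt_of_lt_of_le (Nat.lt_succ_self i) (hf.blockStart_strictMono.id_le _)

theorem DelayFn.add_le_blockStart_succ (hf : DelayFn f) (i : ℕ) :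
    f 0 + i ≤ blockStart f (i + 1) := by
  induction i with
  | zero => simp [blockStart]
  | succ i ih => have := hf (i + 1); simp only [blockStart] at ih ⊢; omega

theorem oHist_succ (u : ℕ → List I) (i : ℕ) : oHist u (i + 1) = oHist u i ++ u (i + 1) := by
  simp [oHist, List.range_succ]

theorem length_oHist {u : ℕ → List I} (hu : ∀ i, (u i).length = f i) (i : ℕ) :
    (oHist u i).length = blockStart f (i + 1) := by
  induction i with
  | zero => simp [oHist, hu, blockStart]
  | succ i ih => rw [oHist_succ, List.length_append, ih, hu]; rfl

theorem oHist_prefix (u : ℕ → List I) {i j : ℕ} (h : i ≤ j) : oHist u i <+: oHist u j := by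
  induction j, h using Nat.le_induction with
  | base => exact List.prefix_refl _
  | succ j _ ih => exact ih.trans (oHist_succ u j ▸ List.prefix_append _ _)

theorem getD_oHist [Inhabited I] (hf : DelayFn f) {u : ℕ → List I}
    (hu : ∀ i, (u i).length = f i) {i r : ℕ} (hr : r < blockStart f (i + 1)) :
    (oHist u i).getD r default = flatWord u r := by
  have key : ∀ {l₁ l₂ : List I}, l₁ <+: l₂ → r < l₁.length →
      l₁.getD r default = l₂.getD r default := fun h hr => by
    rw [List.getD_eq_getElem _ _ hr, List.getD_eq_getElem _ _ (hr.trans_le h.length_le),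
      h.getElem hr]
  change _ = (oHist u r).getD r default
  rcases le_total i r with h | h
  · exact key (oHist_prefix u h) (by rwa [length_oHist hu])
  · exact (key (oHist_prefix u h) (by rw [length_oHist hu]; exact hf.lt_blockStart_succ r)).symm

theorem exists_strategy_of_lookahead [Inhabited I] (hf : DelayFn f) {K : ℕ} (hK : K < f 0)
    (β : (ℕ → I) → ℕ → O) (hβ : ∀ α α' p, (∀ r ≤ p + K, α r = α' r) → β α p = β α' p) :
    ∃ τO : List I → O, ∀ u v, (∀ i, (u i).length = f i) → (∀ i, v i = τO (oHist u i)) →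
      v = β (flatWord u) := by
  have hround : ∀ ws : List I, ∃ i, ws.length ≤ blockStart f (i + 1) :=
    fun ws => ⟨ws.length, hf.lt_blockStart_succ _ |>.le⟩
  refine ⟨fun ws => β (fun r => ws.getD r default) (Nat.find (hround ws)), fun u v hu hv => ?_⟩
  funext i
  have hi : Nat.find (hround (oHist u i)) = i := by
    rw [Nat.find_eq_iff, length_oHist hu]
    exact ⟨le_rfl, fun j hj => not_le.2 (hf.blockStart_strictMono (by omega))⟩
  rw [hv]
  dsimp only
  rw [hi]
  refine hβ _ _ i fun r hr => getD_oHist hf hu ?_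
  have := hf.add_le_blockStart_succ i
  omega

def wordBlocks (f : ℕ → ℕ) (g : ℕ → I) (i : ℕ) : List I :=
  (List.range (f i)).map fun t => g (blockStart f i + t)

theorem oHist_wordBlocks (g : ℕ → I) (i : ℕ) :
    oHist (wordBlocks f g) i = (List.range (blockStart f (i + 1))).map g := by
  induction i with
  | zero => simp [oHist, wordBlocks, blockStart]
  | succ i ih =>
    rw [oHist_succ, ih, show blockStart f (i + 1 + 1) = blockStart f (i + 1) + f (i + 1) from rfl,
      List.range_add, List.map_append, List.map_map]
    rfl

theorem flatWord_wordBlocks [Inhabited I] (hf : DelayFn f) (g : ℕ → I) :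
    flatWord (wordBlocks f g) = g := by
  funext p
  change (oHist _ p).getD p default = g p
  rw [oHist_wordBlocks, List.getD_eq_getElem _ _ (by simpa using hf.lt_blockStart_succ p)]
  simp

def response (f : ℕ → ℕ) (τO : List I → O) (g : ℕ → I) : ℕ → I × O :=
  fun p => (g p, τO ((List.range (blockStart f (p + 1))).map g))

theorem OWinning.response_mem [Inhabited I] {L : Set (ℕ → I × O)} {τO : List I → O}
    (hτ : OWinning f L τO) (hf : DelayFn f) (g : ℕ → I) : response f τO g ∈ L := by
  have := hτ (wordBlocks f g) _ (by simp [wordBlocks]) fun i => rfl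
  simp only [flatWord_wordBlocks hf, oHist_wordBlocks] at this
  exact this

theorem le_stratCost_response [Inhabited I] (wc : (ℕ → I × O) → ℕ∞) (hf : DelayFn f)
    (τO : List I → O) (g : ℕ → I) : wc (response f τO g) ≤ stratCost wc f τO := by
  refine le_iSup_of_le (wordBlocks f g) (le_iSup_of_le (fun i => τO (oHist (wordBlocks f g) i))
    (le_iSup_of_le ⟨by simp [wordBlocks], fun i => rfl⟩ (le_of_eq ?_)))
  simp only [flatWord_wordBlocks hf, oHist_wordBlocks]
  rfl

end DelayGames

namespace DelayLowerBound

/-- At a `rest` position Player O either announces the last letter `c` of the coming block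
(state `lastIs c f`, where `f` records whether the letter just read was `c`), or announces `#`
and then, in state `pending`, a letter `j` with a flaw in the block (state `flawAt j f`, where
`f` records that an occurrence of `j` has been followed by smaller letters only). -/
inductive State (n : ℕ) : Type
  | rest | done | sink | pending
  | lastIs (c : Fin (n + 1)) (f : Bool)
  | flawAt (j : Fin (n + 1)) (f : Bool)

variable {n : ℕ} {m : ℕ} {f : ℕ → ℕ} {w : ℕ → Fin (n + 1) × Fin (n + 1)}

def State.equivSum : State n ≃ Fin 4 ⊕ (Fin (n + 1) × Bool) ⊕ (Fin (n + 1) × Bool) where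
  toFun
    | .rest => .inl 0 | .done => .inl 1 | .sink => .inl 2 | .pending => .inl 3
    | .lastIs c f => .inr (.inl (c, f))
    | .flawAt j f => .inr (.inr (j, f))
  invFun
    | .inl 0 => .rest | .inl 1 => .done | .inl 2 => .sink | .inl 3 => .pending
    | .inr (.inl (c, f)) => .lastIs c f
    | .inr (.inr (j, f)) => .flawAt j f
  left_inv s := by cases s <;> rfl
  right_inv x := by rcases x with i | ⟨c, f⟩ | ⟨j, f⟩ <;> [fin_cases i <;> rfl; rfl; rfl]

instance : Fintype (State n) := Fintype.ofEquiv _ State.equivSum.symm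

theorem State.card : Fintype.card (State n) = 4 * n + 8 := by
  rw [Fintype.card_congr State.equivSum]
  simp
  ring

/-- Letters are pairs (input of Player I, output of Player O); `Fin.last n` stands for `#`. -/
def step : State n → Fin (n + 1) × Fin (n + 1) → State n
  | .rest, x => if x.2 = Fin.last n then .pending else .lastIs x.2 false
  | .pending, x =>
      if x.1 = Fin.last n then (if x.2 = Fin.last n then .done else .sink)
      else if x.2 = Fin.last n then .sink else .flawAt x.2 (x.1 = x.2)
  | .lastIs c f, x =>
      if x.1 = Fin.last n then (if f then .done else .sink) else .lastIs c (x.1 = c)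
  | .flawAt j f, x =>
      if x.1 = Fin.last n then .sink
      else if x.1 = j then (if f then .done else .flawAt j true)
      else .flawAt j (f && x.1 < j)
  | .done, _ => .rest
  | .sink, _ => .sink

def color : State n → ℕ
  | .rest => 2
  | _ => 1

variable (n) in
def automaton : PACost (State n) (Fin (n + 1) × Fin (n + 1)) where
  qI := .rest
  δ := step
  Ω := color
  Cst _ _ := true

theorem automaton_finBuchi : (automaton n).FinBuchi :=
  ⟨fun _ _ => rfl, fun s => by cases s <;> simp [automaton, color]⟩

theorem color_eq_two_iff {s : State n} : (automaton n).Ω s = 2 ↔ s = .rest := by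
  cases s <;> simp [automaton, color]

theorem color_eq_one_iff {s : State n} : (automaton n).Ω s = 1 ↔ s ≠ .rest := by
  cases s <;> simp [automaton, color]

abbrev run (w : ℕ → Fin (n + 1) × Fin (n + 1)) : ℕ → State n :=
  (automaton n).stateAt .rest w

theorem run_succ (w : ℕ → Fin (n + 1) × Fin (n + 1)) (p : ℕ) :
    run w (p + 1) = step (run w p) (w p) := rfl

theorem run_lastIs {b e : ℕ} {c : Fin (n + 1)} {f : Bool} (hb : run w b = .lastIs c f)
    (hbe : b < e) (hnh : ∀ r, b ≤ r → r < e → (w r).1 ≠ Fin.last n) :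
    run w e = .lastIs c ((w (e - 1)).1 = c) := by
  induction e, hbe using Nat.le_induction with
  | base => simp [run_succ, hb, step, hnh b le_rfl (by omega)]
  | succ e hbe ih =>
    rw [run_succ, ih fun r h1 h2 => hnh r h1 (by omega)]
    simp [step, hnh e (by omega) (by omega)]

theorem run_flawAt {b e : ℕ} {j : Fin (n + 1)} (hb : run w b = .pending) (hj : (w b).2 = j)
    (hjl : j ≠ Fin.last n) (hbe : b < e) (hnh : ∀ r, b ≤ r → r < e → (w r).1 ≠ Fin.last n)
    (hnf : ∀ p s, b ≤ p → s < e → IsFlaw (fun r => (w r).1) p s → (w p).1 ≠ j) :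
    run w e = .flawAt j (FlagAt (fun r => (w r).1) j b e) := by
  induction e, hbe using Nat.le_induction with
  | base =>
    have hflag : FlagAt (fun r => (w r).1) j b (b + 1) ↔ (w b).1 = j := by
      rw [flagAt_succ le_rfl]
      simp [FlagAt]
      omega
    simp [run_succ, hb, step, hnh b le_rfl (by omega), hj, hjl, hflag]
  | succ e hbe ih =>
    rw [run_succ, ih (fun r h1 h2 => hnh r h1 (by omega))
      (fun p s h1 h2 => hnf p s h1 (by omega)), flagAt_succ (by omega)]
    by_cases he : (w e).1 = j
    · have hnflag : ¬ FlagAt (fun r => (w r).1) j b e := by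
        rintro ⟨p, hbp, hpe, hp, hle⟩
        exact hnf p e hbp (by omega) ⟨hpe, hp.trans he.symm, fun r h1 h2 => hp ▸ hle r h1 h2⟩ hp
      simp [step, he, hnflag, hjl]
    · simp [step, hnh e (by omega) (by omega), he]

theorem run_sink_of_le {p q : ℕ} (hp : run w p = .sink) (hpq : p ≤ q) : run w q = .sink := by
  induction q, hpq using Nat.le_induction with
  | base => exact hp
  | succ q _ ih => rw [run_succ, ih]; rfl

theorem not_mem_lang_of_sink {p : ℕ} (hp : run w p = .sink) : w ∉ (automaton n).Lang :=
  automaton_finBuchi.not_accepting (p₀ := p) fun q hq => color_eq_one_iff.2 (by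
    change run w q ≠ .rest; simp [run_sink_of_le hp hq])

theorem run_eq_rest_of_lastIs {t : ℕ} (hrest : run w m = .rest) (ht : 0 < t)
    (hhash : (w (m + 1 + t)).1 = Fin.last n)
    (hnh : ∀ r, r < t → (w (m + 1 + r)).1 ≠ Fin.last n) (hclaim : (w m).2 = (w (m + t)).1) :
    run w (m + t + 3) = .rest := by
  have hcl : (w m).2 ≠ Fin.last n := by
    rw [hclaim]
    simpa [show m + 1 + (t - 1) = m + t by omega] using hnh (t - 1) (by omega)
  have h1 : run w (m + 1) = .lastIs (w m).2 false := by simp [run_succ, hrest, step, hcl]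
  have h2 := run_lastIs h1 (show m + 1 < m + 1 + t by omega) fun r h1 h2 => by
    simpa [show m + 1 + (r - (m + 1)) = r by omega] using hnh (r - (m + 1)) (by omega)
  rw [show m + 1 + t - 1 = m + t by omega, ← hclaim] at h2
  rw [show m + t + 3 = m + 1 + t + 1 + 1 by omega, run_succ, run_succ, h2]
  simp [step, hhash]

theorem exists_run_eq_rest_of_flaw {p s : ℕ} (hrest : run w m = .rest)
    (hclaim : (w m).2 = Fin.last n) (hp : m + 1 ≤ p) (hflaw : IsFlaw (fun r => (w r).1) p s)
    (hnh : ∀ r, m + 1 ≤ r → r ≤ s → (w r).1 ≠ Fin.last n) (hj : (w (m + 1)).2 = (w p).1) :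
    ∃ m', m < m' ∧ m' ≤ s + 2 ∧ run w m' = .rest := by
  set j := (w p).1
  have hjl : j ≠ Fin.last n := hnh p hp hflaw.1.le
  have h1 : run w (m + 1) = .pending := by simp [run_succ, hrest, step, hclaim]
  -- the automaton detects the first flaw for `j`
  obtain ⟨e, ⟨q, hq, hqflaw, hqj⟩, hes, hmin⟩ : ∃ e,
      (∃ q, m + 1 ≤ q ∧ IsFlaw (fun r => (w r).1) q e ∧ (w q).1 = j) ∧ e ≤ s ∧
      ∀ e' < e, ¬ ∃ q, m + 1 ≤ q ∧ IsFlaw (fun r => (w r).1) q e' ∧ (w q).1 = j := by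
    have hex : ∃ e q, m + 1 ≤ q ∧ IsFlaw (fun r => (w r).1) q e ∧ (w q).1 = j :=
      ⟨s, p, hp, hflaw, rfl⟩
    exact ⟨Nat.find hex, Nat.find_spec hex, Nat.find_min' hex ⟨p, hp, hflaw, rfl⟩,
      fun _ => Nat.find_min hex⟩
  have hqe : q < e := hqflaw.1
  have hrun := run_flawAt h1 hj hjl (show m + 1 < e by omega)
    (fun r h1 h2 => hnh r h1 (by omega))
    fun q' s' h1 h2 hflaw' hq' => hmin s' h2 ⟨q', h1, hflaw', hq'⟩
  have hflag : FlagAt (fun r => (w r).1) j (m + 1) e :=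
    ⟨q, hq, hqflaw.1, hqj, fun r h1 h2 => hqj ▸ hqflaw.2.2 r h1 h2⟩
  refine ⟨e + 2, by omega, by omega, ?_⟩
  rw [run_succ, run_succ, hrun]
  simp [step, hflag, ← hqflaw.2.1, hqj, hjl]

def lastClaim (x : ℕ → Fin (n + 1)) (b : ℕ) : Fin (n + 1) :=
  if x b = Fin.last n then Fin.last n
  else if h : ∃ t, t < 2 ^ n ∧ x (b + t) = Fin.last n then x (b + Nat.find h - 1)
  else Fin.last n

def flawClaim (x : ℕ → Fin (n + 1)) (b : ℕ) : Fin (n + 1) :=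
  if x b = Fin.last n then Fin.last n
  else if h : ∃ p s, b ≤ p ∧ s < b + 2 ^ n ∧ IsFlaw x p s then x h.choose
  else Fin.last n

theorem exists_isFlaw_of_ne_last {x : ℕ → Fin (n + 1)} {b : ℕ}
    (hx : ∀ r, b ≤ r → r < b + 2 ^ n → x r ≠ Fin.last n) :
    ∃ p s, b ≤ p ∧ s < b + 2 ^ n ∧ IsFlaw x p s := by
  obtain ⟨p, s, hp, hs, hflaw⟩ := exists_isFlaw (fun r => (x r).val) n le_rfl
    fun r h1 h2 => Fin.val_lt_last (hx r h1 h2)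
  exact ⟨p, s, hp, hs, isFlaw_val_iff.1 hflaw⟩

theorem exists_run_eq_rest_of_claims {x x' : ℕ → Fin (n + 1)}
    (hx : ∀ r ≤ m + 2 ^ n, x r = (w r).1) (hx' : ∀ r ≤ m + 2 ^ n, x' r = (w r).1)
    (hrest : run w m = .rest) (h1 : (w m).2 = lastClaim x (m + 1))
    (h2 : run w (m + 1) = .pending → (w (m + 1)).2 = flawClaim x' (m + 1)) :
    ∃ m', m < m' ∧ m' ≤ m + 2 ^ n + 2 ∧ run w m' = .rest := by
  have hpos : 0 < 2 ^ n := by positivity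
  by_cases hempty : (w (m + 1)).1 = Fin.last n
  · have hc1 : (w m).2 = Fin.last n := by
      rw [h1, lastClaim, if_pos ((hx _ (by omega)).trans hempty)]
    have hpend : run w (m + 1) = .pending := by simp [run_succ, hrest, step, hc1]
    have hc2 : (w (m + 1)).2 = Fin.last n := by
      rw [h2 hpend, flawClaim, if_pos ((hx' _ (by omega)).trans hempty)]
    exact ⟨m + 3, by omega, by omega, by simp [run_succ, hpend, step, hempty, hc2]⟩
  have hxb : x (m + 1) ≠ Fin.last n := (hx _ (by omega)).trans_ne hempty
  by_cases hhash : ∃ t, t < 2 ^ n ∧ x (m + 1 + t) = Fin.last n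
  · obtain ⟨t, ⟨ht, hlast⟩, hfirst, htdef⟩ : ∃ t, (t < 2 ^ n ∧ x (m + 1 + t) = Fin.last n) ∧
        (∀ r < t, ¬ (r < 2 ^ n ∧ x (m + 1 + r) = Fin.last n)) ∧ Nat.find hhash = t :=
      ⟨_, Nat.find_spec hhash, fun _ => Nat.find_min hhash, rfl⟩
    have ht0 : 0 < t := Nat.pos_of_ne_zero fun h => hxb (by simpa [h] using hlast)
    have hc1 : (w m).2 = (w (m + t)).1 := by
      rw [h1, lastClaim, if_neg hxb, dif_pos hhash, htdef, show m + 1 + t - 1 = m + t by omega,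
        hx _ (by omega)]
    refine ⟨m + t + 3, by omega, by omega, run_eq_rest_of_lastIs hrest ht0 ?_ ?_ hc1⟩
    · rwa [← hx _ (by omega)]
    · exact fun r hr => by rw [← hx _ (by omega)]; exact fun h => hfirst r hr ⟨by omega, h⟩
  push Not at hhash
  have hnh : ∀ r, m + 1 ≤ r → r < m + 1 + 2 ^ n → (w r).1 ≠ Fin.last n := fun r h1 h2 => by
    simpa [← hx r (by omega), show m + 1 + (r - (m + 1)) = r by omega] using
      hhash (r - (m + 1)) (by omega)
  have hc1 : (w m).2 = Fin.last n := by
    rw [h1, lastClaim, if_neg hxb, dif_neg (by push Not; exact hhash)]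
  have hpend : run w (m + 1) = .pending := by simp [run_succ, hrest, step, hc1]
  have hex := exists_isFlaw_of_ne_last (x := x') (b := m + 1) fun r h1 h2 => by
    rw [hx' r (by omega)]
    exact hnh r h1 h2
  obtain ⟨s, hp, hs, hflaw⟩ := hex.choose_spec
  have hps : hex.choose < s := hflaw.1
  have hc2 : (w (m + 1)).2 = (w hex.choose).1 := by
    rw [h2 hpend, flawClaim, if_neg ((hx' _ (by omega)).trans_ne hempty), dif_pos hex,
      hx' _ (by omega)]
  obtain ⟨m', hm', hm's, hrest'⟩ := exists_run_eq_rest_of_flaw hrest hc1 hp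
    (hflaw.congr fun r _ h => hx' r (by omega)) (fun r h1 h2 => hnh r h1 (by omega)) hc2
  exact ⟨m', hm', by omega, hrest'⟩

def claim : State n → (ℕ → Fin (n + 1)) → ℕ → Fin (n + 1)
  | .rest, x, p => lastClaim x (p + 1)
  | .pending, x, p => flawClaim x p
  | _, _, _ => Fin.last n

/-- The run of `A_n` under Player O's strategy.  Truncating the input `α` at `p + 2 ^ n` makes
it evident that the answer at position `p` uses a lookahead of `2 ^ n` letters only. -/
def claimRun (α : ℕ → Fin (n + 1)) : ℕ → State n
  | 0 => .rest
  | p + 1 => step (claimRun α p) (α p, claim (claimRun α p) (fun r => α (min r (p + 2 ^ n))) p)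

def claimWord (α : ℕ → Fin (n + 1)) (p : ℕ) : Fin (n + 1) :=
  claim (claimRun α p) (fun r => α (min r (p + 2 ^ n))) p

theorem claimWord_congr {α α' : ℕ → Fin (n + 1)} {L : ℕ} (h : ∀ r ≤ L + 2 ^ n, α r = α' r)
    {p : ℕ} (hp : p ≤ L) : claimWord α p = claimWord α' p := by
  have hpos : 0 < 2 ^ n := by positivity
  have hwin : ∀ p ≤ L, (fun r => α (min r (p + 2 ^ n))) = fun r => α' (min r (p + 2 ^ n)) :=
    fun p hp => funext fun r => h _ (by omega)
  have hrun : ∀ p ≤ L, claimRun α p = claimRun α' p := by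
    intro p hp
    induction p with
    | zero => rfl
    | succ p ih => simp only [claimRun, ih (by omega), hwin p (by omega), h p (by omega)]
  rw [claimWord, claimWord, hrun p hp, hwin p hp]

theorem run_claimWord (α : ℕ → Fin (n + 1)) (p : ℕ) :
    run (fun r => (α r, claimWord α r)) p = claimRun α p := by
  induction p with
  | zero => rfl
  | succ p ih => rw [run_succ, ih]; rfl

theorem cor_claimWord_le (α : ℕ → Fin (n + 1)) (p : ℕ) :
    (automaton n).Cor .rest (fun r => (α r, claimWord α r)) p ≤ (2 ^ n + 1 : ℕ) := by
  set w := fun r => (α r, claimWord α r)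
  have hgap : ∀ m, run w m = .rest →
      ∃ m', m < m' ∧ m' ≤ m + (2 ^ n + 1) + 1 ∧ run w m' = .rest := by
    intro m hm
    refine exists_run_eq_rest_of_claims (x := fun r => α (min r (m + 2 ^ n)))
      (x' := fun r => α (min r (m + 1 + 2 ^ n))) (fun r hr => by simp [w, hr])
      (fun r hr => by simp [w, show r ≤ m + 1 + 2 ^ n by omega]) hm ?_ fun hpend => ?_
    · change claimWord α m = _
      rw [claimWord, ← run_claimWord, hm]
      rfl
    · change claimWord α (m + 1) = _
      rw [claimWord, ← run_claimWord, hpend]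
      rfl
  rcases exists_near_of_gaps (P := fun m => run w m = .rest) rfl hgap p with
    hp | ⟨q, hpq, hqp, hq⟩
  · rw [PACost.cor_eq_zero (by rw [color_eq_two_iff.2 hp]; decide)]
    exact zero_le
  · exact (automaton_finBuchi.cor_le hpq (color_eq_two_iff.2 hq)).trans
      (by exact_mod_cast (by omega))

theorem wCost_claimWord_le (α : ℕ → Fin (n + 1)) :
    (automaton n).wCost (fun p => (α p, claimWord α p)) ≤ (2 ^ n + 1 : ℕ) :=
  Filter.limsup_le_of_le (h := Filter.Eventually.of_forall (cor_claimWord_le α))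

theorem claimWord_mem_lang (α : ℕ → Fin (n + 1)) :
    (fun p => (α p, claimWord α p)) ∈ (automaton n).Lang :=
  (wCost_claimWord_le α).trans_lt (ENat.natCast_lt_top _)

theorem exists_strategy_stratCost_le (hf : DelayFn f) (hf0 : 2 ^ n + 1 ≤ f 0) :
    ∃ τO, OWinning f (automaton n).Lang τO ∧
      stratCost (automaton n).wCost f τO ≤ (2 ^ n + 1 : ℕ) := by
  obtain ⟨τO, hτO⟩ := exists_strategy_of_lookahead hf (K := 2 ^ n) (by omega) claimWord
    fun α α' p h => claimWord_congr h le_rfl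
  refine ⟨τO, fun u v hu hv => ?_, iSup_le fun u => iSup_le fun v => iSup_le fun ⟨hu, hv⟩ => ?_⟩
  · rw [hτO u v hu hv]
    exact claimWord_mem_lang _
  · rw [hτO u v hu hv]
    exact wCost_claimWord_le _

theorem not_isFlaw_of_ruler {α : ℕ → Fin (n + 1)} {b L : ℕ}
    (hα : ∀ t < L, (α (b + t) : ℕ) = ruler t) {p s : ℕ} (hp : b ≤ p) (hs : s < b + L) :
    ¬ IsFlaw α p s := by
  intro hflaw
  obtain ⟨p, rfl⟩ := Nat.exists_eq_add_of_le hp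
  obtain ⟨s, rfl⟩ := Nat.exists_eq_add_of_le (hp.trans hflaw.1.le)
  exact ruler_not_isFlaw p s
    ((isFlaw_val_iff.2 hflaw).comp_add.congr fun r _ hr => hα r (by omega))

theorem ne_last_of_ruler {α : ℕ → Fin (n + 1)} {b : ℕ}
    (hα : ∀ t < 2 ^ n - 1, (α (b + t) : ℕ) = ruler t) {r : ℕ} (hbr : b ≤ r)
    (hr : r < b + 2 ^ n - 1) : α r ≠ Fin.last n := fun hlast => by
  have := hα (r - b) (by omega)
  rw [Nat.add_sub_cancel' hbr, hlast, Fin.val_last] at this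
  exact (ruler_lt (show r - b + 1 < 2 ^ n by omega)).ne this.symm

theorem exists_sink_of_ruler_block (hn : 0 < n) (hrest : run w m = .rest)
    (hclaim : (w m).2 = Fin.last n)
    (hruler : ∀ t < 2 ^ n - 1, ((w (m + 1 + t)).1 : ℕ) = ruler t)
    (hhash : (w (m + 2 ^ n)).1 = Fin.last n) :
    ∃ p, run w p = .sink := by
  have hpos : 2 ≤ 2 ^ n := Nat.le_self_pow hn.ne' 2
  have hnh : ∀ r, m + 1 ≤ r → r < m + 2 ^ n → (w r).1 ≠ Fin.last n := fun r h1 h2 =>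
    ne_last_of_ruler (α := fun r => (w r).1) hruler h1 (by omega)
  have h1 : run w (m + 1) = .pending := by simp [run_succ, hrest, step, hclaim]
  by_cases hj : (w (m + 1)).2 = Fin.last n
  · exact ⟨m + 2, by simp [run_succ, h1, step, hj, hnh (m + 1) le_rfl (by omega)]⟩
  have hrun := run_flawAt h1 rfl hj (show m + 1 < m + 2 ^ n by omega) hnh
    fun p s hp hs hflaw _ => not_isFlaw_of_ruler hruler hp (by omega) hflaw
  exact ⟨m + 2 ^ n + 1, by rw [run_succ, hrun]; simp [step, hhash]⟩

theorem run_of_ruler_block (hn : 0 < n) (hsafe : ∀ p, run w p ≠ .sink)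
    (hrest : run w m = .rest) (hruler : ∀ t < 2 ^ n - 1, ((w (m + 1 + t)).1 : ℕ) = ruler t)
    (hhash : (w (m + 2 ^ n)).1 = Fin.last n) :
    run w (m + 2 ^ n + 2) = .rest ∧ ∀ r, m < r → r < m + 2 ^ n + 2 → run w r ≠ .rest := by
  have hpos : 2 ≤ 2 ^ n := Nat.le_self_pow hn.ne' 2
  have hnh : ∀ r, m + 1 ≤ r → r < m + 2 ^ n → (w r).1 ≠ Fin.last n := fun r h1 h2 =>
    ne_last_of_ruler (α := fun r => (w r).1) hruler h1 (by omega)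
  set c := (w m).2
  have hc : c ≠ Fin.last n := fun hc =>
    (exists_sink_of_ruler_block hn hrest hc hruler hhash).elim hsafe
  have h1 : run w (m + 1) = .lastIs c false := by simp [run_succ, hrest, step, hc, c]
  have hscan : ∀ e, m + 1 < e → e ≤ m + 2 ^ n → run w e = .lastIs c ((w (e - 1)).1 = c) :=
    fun e h1' h2 => run_lastIs h1 h1' fun r hr1 hr2 => hnh r hr1 (by omega)
  have hlast : (w (m + 2 ^ n - 1)).1 = 0 := by
    have := hruler (2 ^ n - 2) (by omega)
    rw [show m + 1 + (2 ^ n - 2) = m + 2 ^ n - 1 by omega, ruler_two_pow_sub_two hn] at this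
    exact Fin.ext this
  have hc0 : c = 0 := by
    by_contra hc0
    apply hsafe (m + 2 ^ n + 1)
    rw [run_succ, hscan _ (by omega) le_rfl, hlast]
    simp [step, hhash, Ne.symm hc0]
  have hdone : run w (m + 2 ^ n + 1) = .done := by
    rw [run_succ, hscan _ (by omega) le_rfl, hlast]
    simp [step, hhash, hc0]
  refine ⟨by rw [run_succ, hdone]; rfl, fun r hr1 hr2 => ?_⟩
  rcases Nat.lt_or_ge r (m + 2) with hr | hr
  · rw [show r = m + 1 by omega, h1]; simp
  rcases Nat.lt_or_ge r (m + 2 ^ n + 1) with hr' | hr'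
  · rw [hscan r (by omega) (by omega)]; simp
  · rw [show r = m + 2 ^ n + 1 by omega, hdone]; simp

theorem val_ofNat_ruler {t : ℕ} (ht : t + 1 < 2 ^ n) :
    (Fin.ofNat (n + 1) (ruler t) : ℕ) = ruler t := by
  rw [Fin.val_ofNat, Nat.mod_eq_of_lt (by have := ruler_lt ht; omega)]

/-- Ruler blocks, each followed by `#` and one more letter. -/
def costWord (n p : ℕ) : Fin (n + 1) :=
  if p % (2 ^ n + 2) = 2 ^ n then Fin.last n
  else Fin.ofNat (n + 1) (ruler (p % (2 ^ n + 2) - 1))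

theorem costWord_ruler (k : ℕ) {t : ℕ} (ht : t < 2 ^ n - 1) :
    (costWord n ((2 ^ n + 2) * k + 1 + t) : ℕ) = ruler t := by
  rw [costWord, add_assoc, Nat.mul_add_mod, Nat.mod_eq_of_lt (by omega), if_neg (by omega),
    Nat.add_sub_cancel_left, val_ofNat_ruler (by omega)]

theorem costWord_hash (k : ℕ) : costWord n ((2 ^ n + 2) * k + 2 ^ n) = Fin.last n := by
  rw [costWord, Nat.mul_add_mod, Nat.mod_eq_of_lt (by omega), if_pos rfl]

theorem two_pow_add_one_le_stratCost (hn : 0 < n) (hf : DelayFn f)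
    {τO : List (Fin (n + 1)) → Fin (n + 1)} (hτ : OWinning f (automaton n).Lang τO) :
    ((2 ^ n + 1 : ℕ) : ℕ∞) ≤ stratCost (automaton n).wCost f τO := by
  have hpos : 0 < 2 ^ n := by positivity
  set w := response f τO (costWord n)
  have hsafe : ∀ p, run w p ≠ .sink := fun p hp =>
    not_mem_lang_of_sink hp (hτ.response_mem hf _)
  have hstep : ∀ k, run w ((2 ^ n + 2) * k) = .rest →
      run w ((2 ^ n + 2) * k + 2 ^ n + 2) = .rest ∧
      ∀ r, (2 ^ n + 2) * k < r → r < (2 ^ n + 2) * k + 2 ^ n + 2 → run w r ≠ .rest :=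
    fun k hk => run_of_ruler_block hn hsafe hk (fun t ht => costWord_ruler k ht) (costWord_hash k)
  have hrest : ∀ k, run w ((2 ^ n + 2) * k) = .rest := by
    intro k
    induction k with
    | zero => rfl
    | succ k ih => rw [mul_add, mul_one, ← add_assoc]; exact (hstep k ih).1
  have hcor : ∀ k, (automaton n).Cor .rest w ((2 ^ n + 2) * k + 1) = (2 ^ n + 1 : ℕ) := by
    intro k
    obtain ⟨hnext, hbetween⟩ := hstep k (hrest k)
    rw [automaton_finBuchi.cor_eq (show _ < (2 ^ n + 2) * k + 2 ^ n + 2 by omega)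
      (color_eq_one_iff.2 (hbetween _ (by omega) (by omega)))
      (color_eq_two_iff.2 hnext) fun r h1 h2 => color_eq_one_iff.2 (hbetween r (by omega) h2)]
    congr 1
    omega
  refine le_trans ?_ (le_stratCost_response _ hf τO (costWord n))
  refine Filter.le_limsup_of_frequently_le (Filter.frequently_atTop.2 ?_)
  exact fun K => ⟨(2 ^ n + 2) * K + 1, by nlinarith, (hcor K).ge⟩

def refute (c : Fin (n + 1)) : Fin (n + 1) := if c = 0 then 1 else 0

theorem refute_ne_last (hn : 1 < n) (c : Fin (n + 1)) : refute c ≠ Fin.last n := by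
  unfold refute
  split_ifs <;> simp [Fin.ext_iff, Nat.mod_eq_of_lt (show 1 < n + 1 by omega)] <;> omega

theorem refute_ne (hn : 1 < n) (c : Fin (n + 1)) : refute c ≠ c := by
  unfold refute
  split_ifs with h
  · simp [h, Fin.ext_iff, Nat.mod_eq_of_lt (show 1 < n + 1 by omega)]
  · exact Ne.symm h

/-- A ruler block, ended so as to refute Player O's first announcement `c`: by `#` if `c = #`
(a ruler block has no flaw), otherwise by a letter different from `c`. -/
def thresholdWord (n : ℕ) (c : Fin (n + 1)) (p : ℕ) : Fin (n + 1) :=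
  if p < 2 ^ n then Fin.ofNat (n + 1) (ruler (p - 1))
  else if p = 2 ^ n ∧ c ≠ Fin.last n then refute c
  else Fin.last n

theorem not_oWinning (hn : 1 < n) (hf : DelayFn f) (hf0 : f 0 ≤ 2 ^ n)
    (τO : List (Fin (n + 1)) → Fin (n + 1)) : ¬ OWinning f (automaton n).Lang τO := by
  intro hτ
  have hpos : 2 ≤ 2 ^ n := Nat.le_self_pow (by omega) 2
  -- Player O's first announcement only sees letters before position `2 ^ n`
  set c := τO ((List.range (f 0)).map (thresholdWord n (Fin.last n)))
  set w := response f τO (thresholdWord n c)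
  have hsafe : ∀ p, run w p ≠ .sink := fun p hp =>
    not_mem_lang_of_sink hp (hτ.response_mem hf _)
  have hw0 : (w 0).2 = c := by
    change τO ((List.range (blockStart f 0 + f 0)).map _) = c
    rw [show blockStart f 0 = 0 from rfl, zero_add]
    exact congrArg τO (List.map_congr_left fun t ht => by
      simp only [thresholdWord, if_pos (show t < 2 ^ n by simp at ht; omega)])
  have hruler : ∀ t < 2 ^ n - 1, ((w (0 + 1 + t)).1 : ℕ) = ruler t := fun t ht => by
    change (thresholdWord n c (0 + 1 + t) : ℕ) = ruler t
    rw [thresholdWord, if_pos (by omega), show 0 + 1 + t - 1 = t by omega,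
      val_ofNat_ruler (by omega)]
  by_cases hc : c = Fin.last n
  · obtain ⟨p, hp⟩ := exists_sink_of_ruler_block (by omega) rfl (hw0.trans hc) hruler
      (by simp [w, response, thresholdWord, hc])
    exact hsafe p hp
  have hend : (w (2 ^ n)).1 = refute c := by simp [w, response, thresholdWord, hc]
  have hafter : (w (2 ^ n + 1)).1 = Fin.last n := by simp [w, response, thresholdWord]
  have h1 : run w 1 = .lastIs c false := by
    change step .rest (w 0) = _
    simp [step, hw0, hc]
  have hrun := run_lastIs h1 (show 1 < 2 ^ n + 1 by omega) fun r h1 h2 => by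
    rcases Nat.lt_or_ge r (2 ^ n) with hr | hr
    · exact ne_last_of_ruler (α := fun r => (w r).1) hruler h1 (by omega)
    · exact (show r = 2 ^ n by omega) ▸ hend ▸ refute_ne_last hn c
  apply hsafe (2 ^ n + 2)
  rw [run_succ, hrun, Nat.add_sub_cancel, hend]
  simp [step, refute_ne hn c, hafter]

end DelayLowerBound

open DelayLowerBound in
/-- Proposition 1, lower bounds. There is a linear-size family of finitary
Büchi automata `A_n` over `{1, …, n, #}²` (modeled as `Fin (n+1)`, with `#` the last letter)
such that Player O wins `Γ_f(L(A_n))` iff `f 0 ≥ 2^n + 1`, and for every such `f` an optimal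
winning strategy for Player O exists and has cost `2^n + 1`. -/
theorem statement3 :
    ∃ c : ℕ, 0 < c ∧ ∀ n : ℕ, 1 < n →
      ∃ m : ℕ, ∃ M : PACost (Fin m) (Fin (n + 1) × Fin (n + 1)),
        m ≤ c * n ∧ M.FinBuchi ∧
        (∀ f : ℕ → ℕ, DelayFn f → (OWins f M.Lang ↔ 2 ^ n + 1 ≤ f 0)) ∧
        (∀ f : ℕ → ℕ, DelayFn f → 2 ^ n + 1 ≤ f 0 →
          OptimalCostIs M.Lang M.wCost f ((2 ^ n + 1 : ℕ) : ℕ∞)) := by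
  refine ⟨8, by norm_num, fun n hn => ?_⟩
  let e := Fintype.equivFinOfCardEq (State.card (n := n))
  refine ⟨4 * n + 8, (automaton n).relabel e, by omega, automaton_finBuchi.relabel e,
    fun f hf => ?_, fun f hf hf0 => ?_⟩ <;>
    simp only [PACost.lang_relabel, PACost.wCost_relabel]
  · refine ⟨fun ⟨τO, hτ⟩ => ?_, fun hf0 => ?_⟩
    · by_contra hf0
      exact not_oWinning hn hf (by omega) τO hτ
    · obtain ⟨τO, hτ, -⟩ := exists_strategy_stratCost_le hf hf0
      exact ⟨τO, hτ⟩
  · obtain ⟨τO, hτ, hcost⟩ := exists_strategy_stratCost_le hf hf0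
    exact ⟨⟨τO, hτ, le_antisymm hcost (two_pow_add_one_le_stratCost (by omega) hf hτ)⟩,
      fun τO' hτ' => two_pow_add_one_le_stratCost (by omega) hf hτ'⟩
end
end

section
/- For every n ≥ 1, every word w over the alphabet {1, …, n} of length 2^n contains a bad j-pair for some j ∈ {1, …, n}. -/
attribute [local instance] Classical.propDecidable

noncomputable section

/-- The word `w` (over the alphabet `{1, …, n} ⊆ ℕ`) contains a bad `j`-pair: two
occurrences of `j` with no larger letter in between. -/
def HasBadPair (w : List ℕ) (j : ℕ) : Prop :=
  ∃ i i' : Fin w.length, (i : ℕ) < (i' : ℕ) ∧ w.get i = j ∧ w.get i' = j ∧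
    ∀ i'' : Fin w.length, (i : ℕ) < (i'' : ℕ) → (i'' : ℕ) < (i' : ℕ) → w.get i'' ≤ j

/-- Structural version of `HasBadPair`. -/
def BP (w : List ℕ) (j : ℕ) : Prop :=
  ∃ a b c : List ℕ, w = a ++ j :: (b ++ j :: c) ∧ ∀ x ∈ b, x ≤ j

lemma BP_hasBadPair {w : List ℕ} {j : ℕ} (h : BP w j) : HasBadPair w j := by
  obtain ⟨a, b, c, rfl, hb⟩ := h
  have hlen : (a ++ j :: (b ++ j :: c)).length = a.length + b.length + c.length + 2 := by
    simp; ring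
  have hi : a.length < (a ++ j :: (b ++ j :: c)).length := by rw [hlen]; omega
  have hi' : a.length + b.length + 1 < (a ++ j :: (b ++ j :: c)).length := by rw [hlen]; omega
  refine ⟨⟨a.length, hi⟩, ⟨a.length + b.length + 1, hi'⟩, by simp only [Fin.val_mk]; omega, ?_, ?_, ?_⟩
  · simp [List.get_eq_getElem, List.getElem_append_right (le_refl a.length)]
  · have h1 : a.length ≤ a.length + b.length + 1 := by omega
    simp only [List.get_eq_getElem]
    rw [List.getElem_append_right h1]
    simp only [show a.length + b.length + 1 - a.length = b.length + 1 from by omega,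
      List.getElem_cons_succ]
    rw [List.getElem_append_right (le_refl b.length)]
    simp
  · intro i'' h1 h2
    simp only [Fin.val_mk] at h1 h2
    simp only [List.get_eq_getElem]
    have h1' : a.length ≤ (i'' : ℕ) := le_of_lt h1
    rw [List.getElem_append_right h1']
    obtain ⟨k, hk⟩ : ∃ k, (i'' : ℕ) - a.length = k + 1 := ⟨(i'' : ℕ) - a.length - 1, by omega⟩
    simp only [hk, List.getElem_cons_succ]
    have hkb : k < b.length := by omega
    rw [List.getElem_append_left hkb]
    exact hb _ (List.getElem_mem hkb)

lemma BP_left {u v : List ℕ} {j : ℕ} (h : BP u j) : BP (u ++ v) j := by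
  obtain ⟨a, b, c, rfl, hb⟩ := h
  exact ⟨a, b, c ++ v, by simp, hb⟩

lemma BP_right {u v : List ℕ} {j : ℕ} (h : BP v j) : BP (u ++ v) j := by
  obtain ⟨a, b, c, rfl, hb⟩ := h
  exact ⟨u ++ a, b, c, by simp, hb⟩

lemma aux : ∀ n : ℕ, ∀ w : List ℕ, (∀ a ∈ w, 1 ≤ a ∧ a ≤ n) →
    (∀ j : ℕ, ¬ BP w j) → w.length < 2 ^ n := by
  intro n
  induction n with
  | zero =>
    intro w halpha _
    have : w = [] := by
      cases w with
      | nil => rfl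
      | cons x xs => exact absurd (halpha x (by simp)) (by omega)
    simp [this]
  | succ n ih =>
    intro w halpha hnb
    by_cases hmem : (n + 1) ∈ w
    · obtain ⟨u, v, rfl⟩ := List.append_of_mem hmem
      have hu : (n + 1) ∉ u := by
        intro h
        obtain ⟨s, t, rfl⟩ := List.append_of_mem h
        exact hnb (n + 1) ⟨s, t, v, by simp, fun x hx =>
          (halpha x (by simp [hx])).2⟩
      have hv : (n + 1) ∉ v := by
        intro h
        obtain ⟨s, t, rfl⟩ := List.append_of_mem h
        exact hnb (n + 1) ⟨u, s, t, by simp, fun x hx =>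
          (halpha x (by simp [hx])).2⟩
      have hub : ∀ a ∈ u, 1 ≤ a ∧ a ≤ n := by
        intro a ha
        have := halpha a (by simp [ha])
        have : a ≠ n + 1 := fun h => hu (h ▸ ha)
        omega
      have hvb : ∀ a ∈ v, 1 ≤ a ∧ a ≤ n := by
        intro a ha
        have h1 := halpha a (by simp [ha])
        have : a ≠ n + 1 := fun h => hv (h ▸ ha)
        omega
      have hnu : ∀ j : ℕ, ¬ BP u j := fun j h =>
        hnb j (BP_left (v := (n+1) :: v) h)
      have hnv : ∀ j : ℕ, ¬ BP v j := fun j h =>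
        hnb j (by have := BP_right (u := u ++ [n+1]) h; simpa using this)
      have h1 := ih u hub hnu
      have h2 := ih v hvb hnv
      have : (u ++ (n+1) :: v).length = u.length + v.length + 1 := by simp; ring
      rw [this, pow_succ]
      omega
    · have halpha' : ∀ a ∈ w, 1 ≤ a ∧ a ≤ n := by
        intro a ha
        have h1 := halpha a ha
        have : a ≠ n + 1 := fun h => hmem (h ▸ ha)
        omega
      have := ih w halpha' hnb
      have h2 : (2:ℕ) ^ n ≤ 2 ^ (n+1) := Nat.pow_le_pow_right (by norm_num) (by omega)
      omega

/-- Every word over `{1, …, n}` of length `2^n` contains a bad `j`-pair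
for some `j ∈ {1, …, n}`. -/
theorem statement16 (n : ℕ) (hn : 1 ≤ n) (w : List ℕ)
    (halpha : ∀ a ∈ w, 1 ≤ a ∧ a ≤ n) (hlen : w.length = 2 ^ n) :
    ∃ j : ℕ, 1 ≤ j ∧ j ≤ n ∧ HasBadPair w j := by
  by_contra hcon
  push_neg at hcon
  have hnb : ∀ j : ℕ, ¬ BP w j := by
    intro j hbp
    have hj : j ∈ w := by
      obtain ⟨a, b, c, rfl, _⟩ := hbp
      simp
    have hjb := halpha j hj
    exact absurd (BP_hasBadPair hbp) (hcon j hjb.1 hjb.2)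
  have := aux n w halpha hnb
  omega
end
end
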